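/- arXiv:2112.08465 — 3 statements merged into one kernel-verified Lean document; each statement's English description precedes it below -/
import Mathlib

section
/- Let (V,⟨·,·⟩) be a real inner product space of dimension n ≥ 4 and let R be an algebraic curvature tensor on V having 3-positive curvature operator of the second kind. Then for every orthonormal four-frame {e_1,e_2,e_3,e_4} in V and every real number λ, one has R_{1313} + λ²R_{1414} + R_{2323} + λ²R_{2424} - 4λR_{1234} > 0. -/
open scoped RealInnerProductSpace

variable {V : Type*} [NormedAddCommGroup V] [InnerProductSpace ℝ V]

/-- `R` is an algebraic curvature tensor: antisymmetric in the first two slots,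
symmetric under exchange of the first and second pairs, and satisfying the
first Bianchi identity. -/
def IsAlgCurvatureTensor (R : V →ₗ[ℝ] V →ₗ[ℝ] V →ₗ[ℝ] V →ₗ[ℝ] ℝ) : Prop :=
  (∀ x y z w : V, R x y z w = - R y x z w) ∧
  (∀ x y z w : V, R x y z w = R z w x y) ∧
  (∀ x y z w : V, R x y z w + R y z x w + R z x y w = 0)

/-- The Ricci curvature `Ric(x,y) = Σ_j R(x,e_j,y,e_j)` with respect to an
orthonormal basis. -/
noncomputable def ricci {n : ℕ} (b : OrthonormalBasis (Fin n) ℝ V)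
    (R : V →ₗ[ℝ] V →ₗ[ℝ] V →ₗ[ℝ] V →ₗ[ℝ] ℝ) (x y : V) : ℝ :=
  ∑ j, R x (b j) y (b j)

/-- The scalar curvature `S = Σ_{i,j} R_{ijij}`. -/
noncomputable def scalarCurv {n : ℕ} (b : OrthonormalBasis (Fin n) ℝ V)
    (R : V →ₗ[ℝ] V →ₗ[ℝ] V →ₗ[ℝ] V →ₗ[ℝ] ℝ) : ℝ :=
  ∑ i, ∑ j, R (b i) (b j) (b i) (b j)

/-- `φ` is a symmetric bilinear form which is traceless with respect to the
orthonormal basis `b`. -/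
def IsTracelessSymForm {n : ℕ} (b : OrthonormalBasis (Fin n) ℝ V)
    (φ : V →ₗ[ℝ] V →ₗ[ℝ] ℝ) : Prop :=
  (∀ x y : V, φ x y = φ y x) ∧ (∑ i, φ (b i) (b i) = 0)

/-- The inner product `⟨φ,ψ⟩ = Σ_{i,j} φ(e_i,e_j) ψ(e_i,e_j)` of bilinear forms. -/
noncomputable def formInner {n : ℕ} (b : OrthonormalBasis (Fin n) ℝ V)
    (φ ψ : V →ₗ[ℝ] V →ₗ[ℝ] ℝ) : ℝ :=
  ∑ i, ∑ j, φ (b i) (b j) * ψ (b i) (b j)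

/-- The curvature operator of the second kind
`R̊(φ,ψ) = Σ_{i,j,k,l} R_{ijkl} φ(e_i,e_l) ψ(e_j,e_k)`. -/
noncomputable def secondKind {n : ℕ} (b : OrthonormalBasis (Fin n) ℝ V)
    (R : V →ₗ[ℝ] V →ₗ[ℝ] V →ₗ[ℝ] V →ₗ[ℝ] ℝ)
    (φ ψ : V →ₗ[ℝ] V →ₗ[ℝ] ℝ) : ℝ :=
  ∑ i, ∑ j, ∑ k, ∑ l,
    R (b i) (b j) (b k) (b l) * φ (b i) (b l) * ψ (b j) (b k)

/-- `R` has `k`-nonnegative curvature operator of the second kind: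
`Σ_{a=1}^k R̊(φ_a,φ_a) ≥ 0` for every orthonormal `k`-tuple of traceless
symmetric bilinear forms. -/
def kNonnegSecondKind {n : ℕ} (b : OrthonormalBasis (Fin n) ℝ V)
    (R : V →ₗ[ℝ] V →ₗ[ℝ] V →ₗ[ℝ] V →ₗ[ℝ] ℝ) (k : ℕ) : Prop :=
  ∀ φ : Fin k → (V →ₗ[ℝ] V →ₗ[ℝ] ℝ),
    (∀ a, IsTracelessSymForm b (φ a)) →
    (∀ a a', formInner b (φ a) (φ a') = if a = a' then 1 else 0) →
    0 ≤ ∑ a, secondKind b R (φ a) (φ a)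

/-- `R` has `k`-positive curvature operator of the second kind:
`Σ_{a=1}^k R̊(φ_a,φ_a) > 0` for every orthonormal `k`-tuple of traceless
symmetric bilinear forms. -/
def kPosSecondKind {n : ℕ} (b : OrthonormalBasis (Fin n) ℝ V)
    (R : V →ₗ[ℝ] V →ₗ[ℝ] V →ₗ[ℝ] V →ₗ[ℝ] ℝ) (k : ℕ) : Prop :=
  ∀ φ : Fin k → (V →ₗ[ℝ] V →ₗ[ℝ] ℝ),
    (∀ a, IsTracelessSymForm b (φ a)) →
    (∀ a a', formInner b (φ a) (φ a') = if a = a' then 1 else 0) →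
    0 < ∑ a, secondKind b R (φ a) (φ a)

/-!
Write `u ⊙ v = u ⊗ v + v ⊗ u`. In the frame take the off-diagonal forms
`φ₁ = e₀ ⊙ e₂ + λ e₁ ⊙ e₃`, `φ₂ = e₁ ⊙ e₂ - λ e₀ ⊙ e₃`, both of squared norm `2(1 + λ²)`, and the
diagonal forms `ψ₀ = (1 + λ²) e₀ ⊗ e₀ - e₂ ⊗ e₂ - λ² e₃ ⊗ e₃`, `ψ₁` (the same with `e₁` for `e₀`) and
`ψ₂₃ = e₂ ⊗ e₂ - e₃ ⊗ e₃`. Each `{φ₁, φ₂, ψ}` is an orthogonal triple of traceless symmetric forms,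
so 3-positivity gives three strict inequalities. By the first Bianchi identity
`R̊(φ₁) + R̊(φ₂) = 2(R₀₂₀₂ + R₁₂₁₂) + 2λ²(R₀₃₀₃ + R₁₃₁₃) - 12λ R₀₁₂₃`, and the inequalities for
`ψ₀` and `ψ₁` plus `2λ²` times the one for `ψ₂₃` cancel the `R₂₃₂₃` terms, leaving `12(1 + λ²)²`
times the claimed expression.
-/

open Finset

noncomputable def tensorForm (u v : V) : V →ₗ[ℝ] V →ₗ[ℝ] ℝ :=
  (LinearMap.mul ℝ ℝ).compl₁₂ (innerₗ V u) (innerₗ V v)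

@[simp] lemma tensorForm_apply (u v x y : V) : tensorForm u v x y = ⟪u, x⟫ * ⟪v, y⟫ := rfl

noncomputable def symTensor (u v : V) : V →ₗ[ℝ] V →ₗ[ℝ] ℝ := tensorForm u v + tensorForm v u

section BilinearForms

variable {n : ℕ} (b : OrthonormalBasis (Fin n) ℝ V) (R : V →ₗ[ℝ] V →ₗ[ℝ] V →ₗ[ℝ] V →ₗ[ℝ] ℝ)
  (φ ψ χ : V →ₗ[ℝ] V →ₗ[ℝ] ℝ) (c : ℝ)

@[simp] lemma sum_tensorForm_apply_self (u v : V) : ∑ i, tensorForm u v (b i) (b i) = ⟪u, v⟫ := by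
  simpa [real_inner_comm v] using b.sum_inner_mul_inner u v

@[simp] lemma sum_add_apply_self :
    ∑ i, (φ + ψ) (b i) (b i) = ∑ i, φ (b i) (b i) + ∑ i, ψ (b i) (b i) := by
  simp [sum_add_distrib]

@[simp] lemma sum_smul_apply_self : ∑ i, (c • φ) (b i) (b i) = c * ∑ i, φ (b i) (b i) := by
  simp [mul_sum]

@[simp] lemma formInner_add_left : formInner b (φ + ψ) χ = formInner b φ χ + formInner b ψ χ := by
  simp [formInner, add_mul, sum_add_distrib]

@[simp] lemma formInner_add_right : formInner b φ (ψ + χ) = formInner b φ ψ + formInner b φ χ := by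
  simp [formInner, mul_add, sum_add_distrib]

@[simp] lemma formInner_smul_left : formInner b (c • φ) χ = c * formInner b φ χ := by
  simp [formInner, mul_sum, mul_assoc]

@[simp] lemma formInner_smul_right : formInner b φ (c • χ) = c * formInner b φ χ := by
  simp [formInner, mul_sum, mul_left_comm]

lemma formInner_comm : formInner b φ ψ = formInner b ψ φ := by
  simp [formInner, mul_comm]

@[simp] lemma formInner_tensorForm (u v u' v' : V) :
    formInner b (tensorForm u v) (tensorForm u' v') = ⟪u, u'⟫ * ⟪v, v'⟫ := by
  rw [← b.sum_inner_mul_inner u u', ← b.sum_inner_mul_inner v v', sum_mul_sum]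
  simp only [formInner, tensorForm_apply, real_inner_comm (b _)]
  exact sum_congr rfl fun i _ => sum_congr rfl fun j _ => by ring

@[simp] lemma secondKind_add_left :
    secondKind b R (φ + ψ) χ = secondKind b R φ χ + secondKind b R ψ χ := by
  simp [secondKind, add_mul, mul_add, sum_add_distrib]

@[simp] lemma secondKind_add_right :
    secondKind b R φ (ψ + χ) = secondKind b R φ ψ + secondKind b R φ χ := by
  simp [secondKind, mul_add, sum_add_distrib]

@[simp] lemma secondKind_smul_left : secondKind b R (c • φ) χ = c * secondKind b R φ χ := by
  simp only [secondKind, LinearMap.smul_apply, smul_eq_mul, mul_sum]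
  exact sum_congr rfl fun _ _ => sum_congr rfl fun _ _ => sum_congr rfl fun _ _ =>
    sum_congr rfl fun _ _ => by ring

@[simp] lemma secondKind_smul_right : secondKind b R φ (c • χ) = c * secondKind b R φ χ := by
  simp only [secondKind, LinearMap.smul_apply, smul_eq_mul, mul_sum]
  exact sum_congr rfl fun _ _ => sum_congr rfl fun _ _ => sum_congr rfl fun _ _ =>
    sum_congr rfl fun _ _ => by ring

lemma secondKind_tensorForm (u v u' v' : V) :
    secondKind b R (tensorForm u v) (tensorForm u' v') = R u u' v' v := by
  conv_rhs =>
    rw [← b.sum_repr' u]; simp only [map_sum, map_smul, LinearMap.sum_apply, LinearMap.smul_apply]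
    rw [← b.sum_repr' u']; simp only [map_sum, map_smul, LinearMap.sum_apply, LinearMap.smul_apply]
    rw [← b.sum_repr' v']; simp only [map_sum, map_smul, LinearMap.sum_apply, LinearMap.smul_apply]
    rw [← b.sum_repr' v]; simp only [map_sum, map_smul, smul_eq_mul, mul_sum]
  simp only [secondKind, tensorForm_apply]
  exact sum_congr rfl fun _ _ => sum_congr rfl fun _ _ => sum_congr rfl fun _ _ =>
    sum_congr rfl fun _ _ => by simp only [real_inner_comm (b _)]; ring

end BilinearForms

namespace IsAlgCurvatureTensor

variable {R : V →ₗ[ℝ] V →ₗ[ℝ] V →ₗ[ℝ] V →ₗ[ℝ] ℝ} (hR : IsAlgCurvatureTensor R) (x y z w : V)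
include hR

lemma antisymm_left : R x y z w = -R y x z w := hR.1 x y z w

lemma pair_symm : R x y z w = R z w x y := hR.2.1 x y z w

lemma antisymm_right : R x y z w = -R x y w z := by
  rw [hR.pair_symm, hR.antisymm_left, hR.pair_symm]

lemma apply_self_left : R x x z w = 0 := by
  linarith [hR.antisymm_left x x z w]

lemma swap_swap : R y x w z = R x y z w := by
  rw [hR.antisymm_left, hR.antisymm_right, neg_neg]

lemma bianchi_right : R x y z w + R x z w y + R x w y z = 0 := by
  have h := hR.2.2 y z w x
  rw [hR.pair_symm y z, hR.pair_symm z w, hR.pair_symm w y] at h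
  linarith [hR.antisymm_left w x y z, hR.antisymm_left y x z w, hR.antisymm_left z x w y]

end IsAlgCurvatureTensor

noncomputable def offDiagForm (c : ℝ) (u v w z : V) : V →ₗ[ℝ] V →ₗ[ℝ] ℝ :=
  symTensor u v + c • symTensor w z

noncomputable def diagForm (p q r : ℝ) (u v w : V) : V →ₗ[ℝ] V →ₗ[ℝ] ℝ :=
  p • tensorForm u u + q • tensorForm v v + r • tensorForm w w

section Forms

variable {n : ℕ} (b : OrthonormalBasis (Fin n) ℝ V)

lemma isTracelessSymForm_offDiagForm (c : ℝ) {u v w z : V} (huv : ⟪u, v⟫ = 0)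
    (hwz : ⟪w, z⟫ = 0) : IsTracelessSymForm b (offDiagForm c u v w z) := by
  refine ⟨fun x y => ?_, ?_⟩
  · simp only [offDiagForm, symTensor, LinearMap.add_apply, LinearMap.smul_apply,
      tensorForm_apply, smul_eq_mul]
    ring
  · simp only [offDiagForm, symTensor, sum_add_apply_self, sum_smul_apply_self,
      sum_tensorForm_apply_self, real_inner_comm u v, real_inner_comm w z, huv, hwz]
    ring

lemma isTracelessSymForm_diagForm {p q r : ℝ} {u v w : V} (hu : ‖u‖ = 1) (hv : ‖v‖ = 1)
    (hw : ‖w‖ = 1) (hpqr : p + q + r = 0) : IsTracelessSymForm b (diagForm p q r u v w) := by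
  refine ⟨fun x y => ?_, ?_⟩
  · simp only [diagForm, LinearMap.add_apply, LinearMap.smul_apply, tensorForm_apply,
      smul_eq_mul]
    ring
  · simp only [diagForm, sum_add_apply_self, sum_smul_apply_self, sum_tensorForm_apply_self,
      real_inner_self_eq_norm_sq, hu, hv, hw]
    linear_combination hpqr

variable {R : V →ₗ[ℝ] V →ₗ[ℝ] V →ₗ[ℝ] V →ₗ[ℝ] ℝ}

lemma IsAlgCurvatureTensor.secondKind_offDiagForm (hR : IsAlgCurvatureTensor R)
    (c : ℝ) (u v w z : V) :
    secondKind b R (offDiagForm c u v w z) (offDiagForm c u v w z) =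
      2 * R u v u v + 2 * c ^ 2 * R w z w z + 4 * c * (R u w z v + R u z w v) := by
  simp only [offDiagForm, symTensor, secondKind_add_left, secondKind_add_right,
    secondKind_smul_left, secondKind_smul_right, secondKind_tensorForm, hR.apply_self_left]
  linear_combination hR.swap_swap u v u v + c ^ 2 * hR.swap_swap w z w z
    + c * (hR.pair_symm v w z u + hR.swap_swap u z w v + hR.pair_symm v z w u
      + hR.swap_swap u w z v + hR.swap_swap u w z v + hR.pair_symm w v u z
      + hR.swap_swap u z w v + hR.pair_symm z v u w)

lemma IsAlgCurvatureTensor.secondKind_diagForm (hR : IsAlgCurvatureTensor R)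
    (p q r : ℝ) (u v w : V) :
    secondKind b R (diagForm p q r u v w) (diagForm p q r u v w) =
      -2 * (p * q * R u v u v + p * r * R u w u w + q * r * R v w v w) := by
  simp only [diagForm, secondKind_add_left, secondKind_add_right,
    secondKind_smul_left, secondKind_smul_right, secondKind_tensorForm, hR.apply_self_left]
  linear_combination p * q * (hR.antisymm_right u v v u + hR.antisymm_left v u u v)
    + p * r * (hR.antisymm_right u w w u + hR.antisymm_left w u u w)
    + q * r * (hR.antisymm_right v w w v + hR.antisymm_left w v v w)

lemma IsAlgCurvatureTensor.secondKind_offDiagForm_add (hR : IsAlgCurvatureTensor R)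
    (lam : ℝ) (x y z w : V) :
    secondKind b R (offDiagForm lam x z y w) (offDiagForm lam x z y w)
      + secondKind b R (offDiagForm (-lam) y z x w) (offDiagForm (-lam) y z x w) =
      2 * (R x z x z + R y z y z) + 2 * lam ^ 2 * (R x w x w + R y w y w)
        - 12 * lam * R x y z w := by
  rw [hR.secondKind_offDiagForm, hR.secondKind_offDiagForm]
  linear_combination 4 * lam * (hR.antisymm_right x y w z - hR.swap_swap x y z w
    - hR.pair_symm y w x z - hR.antisymm_right x z y w + hR.bianchi_right x y z w)

end Forms

section Positivity

variable {n : ℕ} {b : OrthonormalBasis (Fin n) ℝ V}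
  {R : V →ₗ[ℝ] V →ₗ[ℝ] V →ₗ[ℝ] V →ₗ[ℝ] ℝ}

lemma IsTracelessSymForm.smul {φ : V →ₗ[ℝ] V →ₗ[ℝ] ℝ} (hφ : IsTracelessSymForm b φ) (c : ℝ) :
    IsTracelessSymForm b (c • φ) :=
  ⟨fun x y => by simp [hφ.1 x y], by rw [sum_smul_apply_self, hφ.2, mul_zero]⟩

lemma kPosSecondKind.pos_of_pairwise_orthogonal {k : ℕ} (h : kPosSecondKind b R k)
    (φ : Fin k → V →ₗ[ℝ] V →ₗ[ℝ] ℝ) (hφ : ∀ a, IsTracelessSymForm b (φ a))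
    (hpos : ∀ a, 0 < formInner b (φ a) (φ a))
    (horth : Pairwise fun a a' => formInner b (φ a) (φ a') = 0) :
    0 < ∑ a, secondKind b R (φ a) (φ a) / formInner b (φ a) (φ a) := by
  set c : Fin k → ℝ := fun a => (√(formInner b (φ a) (φ a)))⁻¹
  have hc : ∀ a, c a * c a = (formInner b (φ a) (φ a))⁻¹ := fun a => by
    rw [← mul_inv, Real.mul_self_sqrt (hpos a).le]
  convert h (fun a => c a • φ a) (fun a => (hφ a).smul _) (fun a a' => ?_) using 2 with a
  · simp only [secondKind_smul_left, secondKind_smul_right, ← mul_assoc, hc, div_eq_inv_mul]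
  · simp only [formInner_smul_left, formInner_smul_right]
    split_ifs with haa'
    · subst haa'
      rw [← mul_assoc, mul_comm (c a), hc, inv_mul_cancel₀ (hpos a).ne']
    · rw [horth haa', mul_zero, mul_zero]

end Positivity

section Frame

variable {n : ℕ} (b : OrthonormalBasis (Fin n) ℝ V) {e : Fin 4 → V} (he : Orthonormal ℝ e)
include he

lemma formInner_symTensor_tensorForm_self {i j : Fin 4} (hij : i ≠ j) (s : Fin 4) :
    formInner b (symTensor (e i) (e j)) (tensorForm (e s) (e s)) = 0 := by
  have hee := orthonormal_iff_ite.mp he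
  simp only [symTensor, formInner_add_left, formInner_tensorForm, hee]
  split_ifs <;> simp_all

lemma formInner_offDiagForm_diagForm (c p q r : ℝ) {i j k l : Fin 4} (hij : i ≠ j)
    (hkl : k ≠ l) (s t u : Fin 4) :
    formInner b (offDiagForm c (e i) (e j) (e k) (e l)) (diagForm p q r (e s) (e t) (e u)) = 0 := by
  simp [offDiagForm, diagForm, formInner_symTensor_tensorForm_self b he hij,
    formInner_symTensor_tensorForm_self b he hkl]

lemma formInner_diagForm_self (p q r : ℝ) {i j k : Fin 4} (hij : i ≠ j) (hik : i ≠ k)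
    (hjk : j ≠ k) :
    formInner b (diagForm p q r (e i) (e j) (e k)) (diagForm p q r (e i) (e j) (e k)) =
      p ^ 2 + q ^ 2 + r ^ 2 := by
  have hee := orthonormal_iff_ite.mp he
  simp only [diagForm, formInner_add_left, formInner_add_right,
    formInner_smul_left, formInner_smul_right, formInner_tensorForm, hee]
  simp [hij, hik, hjk, hij.symm, hik.symm, hjk.symm]
  ring

lemma formInner_offDiagForm_pair (lam : ℝ) :
    formInner b (offDiagForm lam (e 0) (e 2) (e 1) (e 3))
      (offDiagForm lam (e 0) (e 2) (e 1) (e 3)) = 2 * (1 + lam ^ 2) ∧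
    formInner b (offDiagForm (-lam) (e 1) (e 2) (e 0) (e 3))
      (offDiagForm (-lam) (e 1) (e 2) (e 0) (e 3)) = 2 * (1 + lam ^ 2) ∧
    formInner b (offDiagForm lam (e 0) (e 2) (e 1) (e 3))
      (offDiagForm (-lam) (e 1) (e 2) (e 0) (e 3)) = 0 := by
  have hee := orthonormal_iff_ite.mp he
  refine ⟨?_, ?_, ?_⟩ <;>
    simp only [offDiagForm, symTensor, formInner_add_left, formInner_add_right,
      formInner_smul_left, formInner_smul_right, formInner_tensorForm, hee] <;>
    simp +decide only [if_true, if_false, mul_one, mul_zero, add_zero, zero_add] <;>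
    ring

end Frame

lemma kPosSecondKind.pos_offDiagForm_diagForm {n : ℕ} {b : OrthonormalBasis (Fin n) ℝ V}
    {R : V →ₗ[ℝ] V →ₗ[ℝ] V →ₗ[ℝ] V →ₗ[ℝ] ℝ} (h3 : kPosSecondKind b R 3) {e : Fin 4 → V}
    (he : Orthonormal ℝ e) (lam : ℝ) {p q r : ℝ} {i j k : Fin 4} (hij : i ≠ j) (hik : i ≠ k)
    (hjk : j ≠ k) (hpqr : p + q + r = 0) (hψ : 0 < p ^ 2 + q ^ 2 + r ^ 2) :
    0 < (p ^ 2 + q ^ 2 + r ^ 2) *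
        (secondKind b R (offDiagForm lam (e 0) (e 2) (e 1) (e 3))
            (offDiagForm lam (e 0) (e 2) (e 1) (e 3))
          + secondKind b R (offDiagForm (-lam) (e 1) (e 2) (e 0) (e 3))
            (offDiagForm (-lam) (e 1) (e 2) (e 0) (e 3)))
      + 2 * (1 + lam ^ 2) * secondKind b R (diagForm p q r (e i) (e j) (e k))
          (diagForm p q r (e i) (e j) (e k)) := by
  obtain ⟨h₁, h₂, h₁₂⟩ := formInner_offDiagForm_pair b he lam
  have hψψ := formInner_diagForm_self b he p q r hij hik hjk
  have h₁ψ := formInner_offDiagForm_diagForm b he lam p q r (i := 0) (j := 2) (k := 1) (l := 3)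
    (by decide) (by decide) i j k
  have h₂ψ := formInner_offDiagForm_diagForm b he (-lam) p q r (i := 1) (j := 2) (k := 0) (l := 3)
    (by decide) (by decide) i j k
  set φ₁ := offDiagForm lam (e 0) (e 2) (e 1) (e 3)
  set φ₂ := offDiagForm (-lam) (e 1) (e 2) (e 0) (e 3)
  set ψ := diagForm p q r (e i) (e j) (e k)
  have hm : 0 < 2 * (1 + lam ^ 2) := by positivity
  have key := h3.pos_of_pairwise_orthogonal ![φ₁, φ₂, ψ] ?_ ?_ ?_
  · simp only [Fin.sum_univ_three, Matrix.cons_val_zero, Matrix.cons_val_one, Matrix.cons_val_two,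
      Matrix.tail_cons, Matrix.head_cons, h₁, h₂, hψψ] at key
    refine (mul_pos (mul_pos hm hψ) key).trans_eq ?_
    field_simp
  · intro a
    fin_cases a
    · exact isTracelessSymForm_offDiagForm b _ (he.2 (by decide)) (he.2 (by decide))
    · exact isTracelessSymForm_offDiagForm b _ (he.2 (by decide)) (he.2 (by decide))
    · exact isTracelessSymForm_diagForm b (he.1 i) (he.1 j) (he.1 k) hpqr
  · intro a
    fin_cases a <;> simp only [Fin.zero_eta, Fin.mk_one, Fin.reduceFinMk, Matrix.cons_val,
      h₁, h₂, hψψ, hm, hψ]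
  · intro a a' haa'
    fin_cases a <;> fin_cases a' <;>
      simp_all [formInner_comm b φ₂ φ₁, formInner_comm b ψ φ₁, formInner_comm b ψ φ₂]

theorem stmt_11_general {n : ℕ}
    (b : OrthonormalBasis (Fin n) ℝ V)
    (R : V →ₗ[ℝ] V →ₗ[ℝ] V →ₗ[ℝ] V →ₗ[ℝ] ℝ)
    (hR : IsAlgCurvatureTensor R)
    (h3 : kPosSecondKind b R 3) :
    ∀ e : Fin 4 → V, Orthonormal ℝ e → ∀ lam : ℝ,
      0 < R (e 0) (e 2) (e 0) (e 2) + lam ^ 2 * R (e 0) (e 3) (e 0) (e 3)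
          + R (e 1) (e 2) (e 1) (e 2) + lam ^ 2 * R (e 1) (e 3) (e 1) (e 3)
          - 4 * lam * R (e 0) (e 1) (e 2) (e 3) := by
  intro e he lam
  have P₀ := h3.pos_offDiagForm_diagForm he lam (p := 1 + lam ^ 2) (q := -1) (r := -lam ^ 2)
    (i := 0) (j := 2) (k := 3) (by decide) (by decide) (by decide) (by ring) (by positivity)
  have P₁ := h3.pos_offDiagForm_diagForm he lam (p := 1 + lam ^ 2) (q := -1) (r := -lam ^ 2)
    (i := 1) (j := 2) (k := 3) (by decide) (by decide) (by decide) (by ring) (by positivity)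
  have P₂₃ := h3.pos_offDiagForm_diagForm he lam (p := 0) (q := 1) (r := -1)
    (i := 0) (j := 2) (k := 3) (by decide) (by decide) (by decide) (by ring) (by norm_num)
  simp only [hR.secondKind_offDiagForm_add, hR.secondKind_diagForm] at P₀ P₁ P₂₃
  refine pos_of_mul_pos_right (a := 12 * (1 + lam ^ 2) ^ 2) ?_ (by positivity)
  linarith [mul_nonneg (sq_nonneg lam) P₂₃.le]

theorem stmt_11 {n : ℕ} (hn : 4 ≤ n)
    (b : OrthonormalBasis (Fin n) ℝ V)
    (R : V →ₗ[ℝ] V →ₗ[ℝ] V →ₗ[ℝ] V →ₗ[ℝ] ℝ)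
    (hR : IsAlgCurvatureTensor R)
    (h3 : kPosSecondKind b R 3) :
    ∀ e : Fin 4 → V, Orthonormal ℝ e → ∀ lam : ℝ,
      0 < R (e 0) (e 2) (e 0) (e 2) + lam ^ 2 * R (e 0) (e 3) (e 0) (e 3)
          + R (e 1) (e 2) (e 1) (e 2) + lam ^ 2 * R (e 1) (e 3) (e 1) (e 3)
          - 4 * lam * R (e 0) (e 1) (e 2) (e 3) :=
  stmt_11_general b R hR h3
end

section
/- Let (V,⟨·,·⟩) be a real inner product space of dimension n ≥ 4 and let R be an algebraic curvature tensor on V having nonnegative curvature operator of the second kind (that is, R̊(φ,φ) ≥ 0 for every traceless symmetric bilinear form φ on V). Then for every orthonormal four-frame {e_1,e_2,e_3,e_4} in V and all real numbers λ, μ, one has R_{1313} + λ²R_{1414} + μ²R_{2323} + λ²μ²R_{2424} - 6λμR_{1234} ≥ 0. -/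
open scoped RealInnerProductSpace

variable {V : Type*} [NormedAddCommGroup V] [InnerProductSpace ℝ V]

/-!
For orthogonal `u, v` the symmetric product `u ⊙ v = u ⊗ v + v ⊗ u` is traceless, and for an
algebraic curvature tensor `R̊(u ⊙ v, w ⊙ z) = 2 (R(u,w,z,v) + R(u,z,w,v))`. With
`α = e₁ ⊙ e₃ + λμ e₂ ⊙ e₄` and `β = λ e₁ ⊙ e₄ - μ e₂ ⊙ e₃`, the parallelogram law gives
`0 ≤ R̊(α + β, α + β) + R̊(α - β, α - β) = 2 (R̊(α, α) + R̊(β, β))`; the cross terms of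
`R̊(α, α) + R̊(β, β)` combine, by the curvature symmetries and the Bianchi identity, into
`-12 λμ R₁₂₃₄`, so the sum is twice the quantity in the theorem.
-/

noncomputable def rankOneForm (u v : V) : V →ₗ[ℝ] V →ₗ[ℝ] ℝ :=
  (LinearMap.mul ℝ ℝ).compl₁₂ (innerₗ V u) (innerₗ V v)

@[simp]
lemma rankOneForm_apply (u v x y : V) : rankOneForm u v x y = ⟪u, x⟫ * ⟪v, y⟫ := rfl

noncomputable def symProdForm (u v : V) : V →ₗ[ℝ] V →ₗ[ℝ] ℝ :=
  rankOneForm u v + rankOneForm v u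

section Curvature

variable {R : V →ₗ[ℝ] V →ₗ[ℝ] V →ₗ[ℝ] V →ₗ[ℝ] ℝ}

lemma IsAlgCurvatureTensor.antisymm_left_s14 (hR : IsAlgCurvatureTensor R) (x y z w : V) :
    R x y z w = -R y x z w :=
  hR.1 x y z w

lemma IsAlgCurvatureTensor.swap_pairs (hR : IsAlgCurvatureTensor R) (x y z w : V) :
    R x y z w = R z w x y :=
  hR.2.1 x y z w

lemma IsAlgCurvatureTensor.bianchi (hR : IsAlgCurvatureTensor R) (x y z w : V) :
    R x y z w + R y z x w + R z x y w = 0 :=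
  hR.2.2 x y z w

lemma IsAlgCurvatureTensor.antisymm_right_s14 (hR : IsAlgCurvatureTensor R) (x y z w : V) :
    R x y z w = -R x y w z := by
  rw [hR.swap_pairs, hR.antisymm_left_s14, hR.swap_pairs]

lemma IsAlgCurvatureTensor.apply_self_left_s14 (hR : IsAlgCurvatureTensor R) (x z w : V) :
    R x x z w = 0 := by
  linarith [hR.antisymm_left_s14 x x z w]

end Curvature

lemma LinearMap.apply_add_add_apply_sub {M : Type*} [AddCommGroup M] [Module ℝ M]
    (B : M →ₗ[ℝ] M →ₗ[ℝ] ℝ) (x y : M) :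
    B (x + y) (x + y) + B (x - y) (x - y) = 2 * (B x x + B y y) := by
  simp only [map_add, map_sub, LinearMap.add_apply, LinearMap.sub_apply]
  ring

section SecondKind

variable {n : ℕ} (b : OrthonormalBasis (Fin n) ℝ V)
  (R : V →ₗ[ℝ] V →ₗ[ℝ] V →ₗ[ℝ] V →ₗ[ℝ] ℝ)

noncomputable def secondKindBilin :
    (V →ₗ[ℝ] V →ₗ[ℝ] ℝ) →ₗ[ℝ] (V →ₗ[ℝ] V →ₗ[ℝ] ℝ) →ₗ[ℝ] ℝ :=
  LinearMap.mk₂ ℝ (secondKind b R)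
    (fun φ φ' ψ => by
      simp only [secondKind, LinearMap.add_apply, mul_add, add_mul, Finset.sum_add_distrib])
    (fun c φ ψ => by
      simp only [secondKind, LinearMap.smul_apply, smul_eq_mul, Finset.mul_sum]
      exact Finset.sum_congr rfl fun _ _ => Finset.sum_congr rfl fun _ _ =>
        Finset.sum_congr rfl fun _ _ => Finset.sum_congr rfl fun _ _ => by ring)
    (fun φ ψ ψ' => by
      simp only [secondKind, LinearMap.add_apply, mul_add, Finset.sum_add_distrib])
    (fun c φ ψ => by
      simp only [secondKind, LinearMap.smul_apply, smul_eq_mul, Finset.mul_sum]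
      exact Finset.sum_congr rfl fun _ _ => Finset.sum_congr rfl fun _ _ =>
        Finset.sum_congr rfl fun _ _ => Finset.sum_congr rfl fun _ _ => by ring)

lemma secondKindBilin_apply (φ ψ : V →ₗ[ℝ] V →ₗ[ℝ] ℝ) :
    secondKindBilin b R φ ψ = secondKind b R φ ψ := rfl

lemma secondKind_rankOneForm (u v w z : V) :
    secondKind b R (rankOneForm u v) (rankOneForm w z) = R u w z v := by
  -- expand one argument at a time, so that the sums come out nested in the order of `secondKind`
  conv_rhs =>
    rw [← b.sum_repr' u]; simp only [map_sum, map_smul, LinearMap.sum_apply, LinearMap.smul_apply]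
    rw [← b.sum_repr' w]; simp only [map_sum, map_smul, LinearMap.sum_apply, LinearMap.smul_apply]
    rw [← b.sum_repr' z]; simp only [map_sum, map_smul, LinearMap.sum_apply, LinearMap.smul_apply]
    rw [← b.sum_repr' v]; simp only [map_sum, map_smul, smul_eq_mul, Finset.mul_sum]
  simp only [secondKind, rankOneForm_apply]
  exact Finset.sum_congr rfl fun i _ => Finset.sum_congr rfl fun j _ =>
    Finset.sum_congr rfl fun k _ => Finset.sum_congr rfl fun l _ => by
      rw [real_inner_comm u, real_inner_comm v, real_inner_comm w, real_inner_comm z]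
      ring

lemma secondKind_symProdForm (hR : IsAlgCurvatureTensor R) (u v w z : V) :
    secondKind b R (symProdForm u v) (symProdForm w z) = 2 * (R u w z v + R u z w v) := by
  simp only [symProdForm, ← secondKindBilin_apply, map_add, LinearMap.add_apply]
  simp only [secondKindBilin_apply, secondKind_rankOneForm]
  rw [hR.swap_pairs v w z u, hR.antisymm_left_s14 z u, hR.antisymm_right_s14 u z,
    hR.swap_pairs v z w u, hR.antisymm_left_s14 w u, hR.antisymm_right_s14 u w]
  ring

lemma secondKind_frame_identity (hR : IsAlgCurvatureTensor R) (e : Fin 4 → V) (lam mu : ℝ) :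
    secondKind b R (symProdForm (e 0) (e 2) + (lam * mu) • symProdForm (e 1) (e 3))
        (symProdForm (e 0) (e 2) + (lam * mu) • symProdForm (e 1) (e 3))
      + secondKind b R (lam • symProdForm (e 0) (e 3) + (-mu) • symProdForm (e 1) (e 2))
        (lam • symProdForm (e 0) (e 3) + (-mu) • symProdForm (e 1) (e 2))
      = 2 * (R (e 0) (e 2) (e 0) (e 2) + lam ^ 2 * R (e 0) (e 3) (e 0) (e 3)
        + mu ^ 2 * R (e 1) (e 2) (e 1) (e 2) + lam ^ 2 * mu ^ 2 * R (e 1) (e 3) (e 1) (e 3)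
        - 6 * lam * mu * R (e 0) (e 1) (e 2) (e 3)) := by
  have hcross : R (e 1) (e 0) (e 2) (e 3) + R (e 1) (e 2) (e 0) (e 3) + R (e 0) (e 1) (e 3) (e 2)
      + R (e 0) (e 3) (e 1) (e 2) - R (e 1) (e 0) (e 3) (e 2) - R (e 1) (e 3) (e 0) (e 2)
      - R (e 0) (e 1) (e 2) (e 3) - R (e 0) (e 2) (e 1) (e 3) = -6 * R (e 0) (e 1) (e 2) (e 3) := by
    linarith [hR.antisymm_left_s14 (e 1) (e 0) (e 2) (e 3), hR.antisymm_left_s14 (e 1) (e 0) (e 3) (e 2),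
      hR.antisymm_right_s14 (e 0) (e 1) (e 3) (e 2), hR.swap_pairs (e 1) (e 2) (e 0) (e 3),
      hR.swap_pairs (e 1) (e 3) (e 0) (e 2), hR.bianchi (e 0) (e 1) (e 2) (e 3),
      hR.antisymm_left_s14 (e 2) (e 0) (e 1) (e 3)]
  simp only [← secondKindBilin_apply, map_add, map_smul, LinearMap.add_apply,
    LinearMap.smul_apply, smul_eq_mul]
  simp only [secondKindBilin_apply, secondKind_symProdForm b R hR, hR.apply_self_left_s14]
  linear_combination (2 * lam * mu) * hcross

end SecondKind

section Traceless

variable {n : ℕ} (b : OrthonormalBasis (Fin n) ℝ V)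

def tracelessSymForms : Submodule ℝ (V →ₗ[ℝ] V →ₗ[ℝ] ℝ) where
  carrier := {φ | IsTracelessSymForm b φ}
  add_mem' {φ ψ} hφ hψ :=
    ⟨fun x y => by simp only [LinearMap.add_apply, hφ.1 x y, hψ.1 x y], by
      simp only [LinearMap.add_apply, Finset.sum_add_distrib, hφ.2, hψ.2, add_zero]⟩
  zero_mem' := ⟨fun _ _ => rfl, Finset.sum_const_zero⟩
  smul_mem' c φ hφ :=
    ⟨fun x y => by simp only [LinearMap.smul_apply, hφ.1 x y], by
      simp only [LinearMap.smul_apply, smul_eq_mul, ← Finset.mul_sum, hφ.2, mul_zero]⟩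

lemma symProdForm_mem_tracelessSymForms {u v : V} (h : ⟪u, v⟫ = 0) :
    symProdForm u v ∈ tracelessSymForms b := by
  refine ⟨fun x y => by simp only [symProdForm, LinearMap.add_apply, rankOneForm_apply]; ring, ?_⟩
  have hdiag (x y : V) : ∑ i, ⟪x, b i⟫ * ⟪y, b i⟫ = ⟪x, y⟫ := by
    rw [← b.sum_inner_mul_inner]
    simp_rw [real_inner_comm y]
  simp only [symProdForm, LinearMap.add_apply, rankOneForm_apply, Finset.sum_add_distrib, hdiag,
    real_inner_comm u, h, add_zero]

end Traceless

theorem stmt_14_general {n : ℕ}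
    (b : OrthonormalBasis (Fin n) ℝ V)
    (R : V →ₗ[ℝ] V →ₗ[ℝ] V →ₗ[ℝ] V →ₗ[ℝ] ℝ)
    (hR : IsAlgCurvatureTensor R)
    (hnn : ∀ φ : V →ₗ[ℝ] V →ₗ[ℝ] ℝ, IsTracelessSymForm b φ →
      0 ≤ secondKind b R φ φ) :
    ∀ e : Fin 4 → V, Orthonormal ℝ e → ∀ lam mu : ℝ,
      0 ≤ R (e 0) (e 2) (e 0) (e 2) + lam ^ 2 * R (e 0) (e 3) (e 0) (e 3)
          + mu ^ 2 * R (e 1) (e 2) (e 1) (e 2)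
          + lam ^ 2 * mu ^ 2 * R (e 1) (e 3) (e 1) (e 3)
          - 6 * lam * mu * R (e 0) (e 1) (e 2) (e 3) := by
  intro e he lam mu
  have hmem (i j : Fin 4) (hij : i ≠ j) : symProdForm (e i) (e j) ∈ tracelessSymForms b :=
    symProdForm_mem_tracelessSymForms b (he.2 hij)
  set α := symProdForm (e 0) (e 2) + (lam * mu) • symProdForm (e 1) (e 3)
  set β := lam • symProdForm (e 0) (e 3) + (-mu) • symProdForm (e 1) (e 2)
  have hα : α ∈ tracelessSymForms b :=
    add_mem (hmem 0 2 (by decide)) (Submodule.smul_mem _ _ (hmem 1 3 (by decide)))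
  have hβ : β ∈ tracelessSymForms b :=
    add_mem (Submodule.smul_mem _ _ (hmem 0 3 (by decide)))
      (Submodule.smul_mem _ _ (hmem 1 2 (by decide)))
  have hnonneg : 0 ≤ secondKind b R α α + secondKind b R β β := by
    have hpar := (secondKindBilin b R).apply_add_add_apply_sub α β
    have hαβ : α - β ∈ tracelessSymForms b := Submodule.sub_mem (M := V →ₗ[ℝ] V →ₗ[ℝ] ℝ) _ hα hβ
    simp only [secondKindBilin_apply] at hpar
    linarith [hnn _ (add_mem hα hβ), hnn _ hαβ]
  linarith [secondKind_frame_identity b R hR e lam mu]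

theorem stmt_14 {n : ℕ} (hn : 4 ≤ n)
    (b : OrthonormalBasis (Fin n) ℝ V)
    (R : V →ₗ[ℝ] V →ₗ[ℝ] V →ₗ[ℝ] V →ₗ[ℝ] ℝ)
    (hR : IsAlgCurvatureTensor R)
    (hnn : ∀ φ : V →ₗ[ℝ] V →ₗ[ℝ] ℝ, IsTracelessSymForm b φ →
      0 ≤ secondKind b R φ φ) :
    ∀ e : Fin 4 → V, Orthonormal ℝ e → ∀ lam mu : ℝ,
      0 ≤ R (e 0) (e 2) (e 0) (e 2) + lam ^ 2 * R (e 0) (e 3) (e 0) (e 3)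
          + mu ^ 2 * R (e 1) (e 2) (e 1) (e 2)
          + lam ^ 2 * mu ^ 2 * R (e 1) (e 3) (e 1) (e 3)
          - 6 * lam * mu * R (e 0) (e 1) (e 2) (e 3) :=
  stmt_14_general b R hR hnn
end

section
/- Let (V,⟨·,·⟩) be a real inner product space of dimension 2m ≥ 4, let J : V → V be a linear map with J² = -id and ⟨Jx,Jy⟩ = ⟨x,y⟩ for all x,y, and let R be an algebraic curvature tensor on V satisfying the Kähler identity R(x,y,z,w) = R(x,y,Jz,Jw) for all x,y,z,w. Suppose there exists β > 1 such that for every orthonormal four-frame {e_1,e_2,e_3,e_4} in V, R_{1313} + R_{1414} + R_{2323} + R_{2424} - 2βR_{1234} ≥ 0. Then the orthogonal bisectional curvature of R vanishes: for all unit vectors X, Y ∈ V with ⟨X,Y⟩ = ⟨X,JY⟩ = 0, one has R(X,JX,Y,JY) = 0. -/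
open scoped RealInnerProductSpace

variable {V : Type*} [NormedAddCommGroup V] [InnerProductSpace ℝ V]

/-!
Put `c = R(X,JX,Y,JY)`. Swapping `e₁, e₂` in an orthonormal frame leaves the four sectional
terms of the hypothesis unchanged and flips the sign of `R₁₂₃₄`, so the hypothesis bounds
`2β|R₁₂₃₄|` by the sectional sum. For the frame `(X, JX, Y, JY)` the Kähler identity and the
Bianchi identity turn the sectional sum into `2c`, so `β|c| ≤ c`, which forces `c = 0` as `β > 1`.
-/

theorem abs_two_mul_le_of_forall_orthonormal {R : V →ₗ[ℝ] V →ₗ[ℝ] V →ₗ[ℝ] V →ₗ[ℝ] ℝ}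
    (hA : ∀ x y z w : V, R x y z w = - R y x z w) {β : ℝ}
    (hIC : ∀ e : Fin 4 → V, Orthonormal ℝ e →
      0 ≤ R (e 0) (e 2) (e 0) (e 2) + R (e 0) (e 3) (e 0) (e 3)
          + R (e 1) (e 2) (e 1) (e 2) + R (e 1) (e 3) (e 1) (e 3)
          - 2 * β * R (e 0) (e 1) (e 2) (e 3))
    {e : Fin 4 → V} (he : Orthonormal ℝ e) :
    |2 * β * R (e 0) (e 1) (e 2) (e 3)| ≤
      R (e 0) (e 2) (e 0) (e 2) + R (e 0) (e 3) (e 0) (e 3)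
        + R (e 1) (e 2) (e 1) (e 2) + R (e 1) (e 3) (e 1) (e 3) := by
  have hswap := hIC _ (he.comp _ (Equiv.swap (0 : Fin 4) 1).injective)
  simp only [Function.comp_apply, Equiv.swap_apply_left, Equiv.swap_apply_right,
    Equiv.swap_apply_of_ne_of_ne (by decide : (2 : Fin 4) ≠ 0) (by decide : (2 : Fin 4) ≠ 1),
    Equiv.swap_apply_of_ne_of_ne (by decide : (3 : Fin 4) ≠ 0) (by decide : (3 : Fin 4) ≠ 1)]
    at hswap
  rw [hA (e 1) (e 0)] at hswap
  have hframe := hIC e he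
  exact abs_le'.2 ⟨by linarith, by linarith⟩

section ComplexStructure

variable {J : V →ₗ[ℝ] V} (hJ2 : ∀ x : V, J (J x) = -x)
  (hJinner : ∀ x y : V, ⟪J x, J y⟫ = ⟪x, y⟫)
include hJ2 hJinner

theorem inner_map_left_eq_neg_inner_map_right (x y : V) : ⟪J x, y⟫ = -⟪x, J y⟫ := by
  have h := hJinner x (J y)
  rw [hJ2, inner_neg_right] at h
  linarith

theorem inner_self_map_eq_zero (x : V) : ⟪x, J x⟫ = 0 := by
  have h := inner_map_left_eq_neg_inner_map_right hJ2 hJinner x x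
  rw [real_inner_comm] at h
  linarith

omit hJ2 in
theorem norm_map_eq (x : V) : ‖J x‖ = ‖x‖ :=
  (J.isometryOfInner hJinner).norm_map x

theorem orthonormal_complexFrame {X Y : V} (hX : ‖X‖ = 1) (hY : ‖Y‖ = 1)
    (hXY : ⟪X, Y⟫ = 0) (hXJY : ⟪X, J Y⟫ = 0) :
    Orthonormal ℝ ![X, J X, Y, J Y] := by
  have hJXY : ⟪J X, Y⟫ = 0 := by
    rw [inner_map_left_eq_neg_inner_map_right hJ2 hJinner, hXJY, neg_zero]
  have hJXJY : ⟪J X, J Y⟫ = 0 := by rw [hJinner, hXY]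
  have hXJX := inner_self_map_eq_zero hJ2 hJinner X
  have hYJY := inner_self_map_eq_zero hJ2 hJinner Y
  rw [orthonormal_iff_ite]
  intro i j
  fin_cases i <;> fin_cases j <;>
    simp [norm_map_eq hJinner, hX, hY, hXY, hXJY, hJXY, hJXJY, hXJX, hYJY,
      real_inner_comm X, real_inner_comm (J X), real_inner_comm Y]

end ComplexStructure

section KahlerCurvature

variable {R : V →ₗ[ℝ] V →ₗ[ℝ] V →ₗ[ℝ] V →ₗ[ℝ] ℝ} (hR : IsAlgCurvatureTensor R)
  {J : V →ₗ[ℝ] V} (hJ2 : ∀ x : V, J (J x) = -x)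
  (hKahler : ∀ x y z w : V, R x y z w = R x y (J z) (J w))
include hR hKahler

omit hJ2 in
theorem IsAlgCurvatureTensor.sectional_map_map (x y : V) :
    R (J x) (J y) (J x) (J y) = R x y x y := by
  rw [← hKahler, hR.2.1, ← hKahler]

include hJ2

theorem IsAlgCurvatureTensor.sectional_map_left (x y : V) :
    R (J x) y (J x) y = R x (J y) x (J y) := by
  calc R (J x) y (J x) y = -R x (J y) (J x) y := by
        rw [hKahler, hJ2, map_neg, LinearMap.neg_apply, hR.2.1]
    _ = R x (J y) x (J y) := by rw [hKahler, hJ2, map_neg, LinearMap.neg_apply, neg_neg]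

theorem IsAlgCurvatureTensor.bisectional_eq_sectional_add_sectional (x y : V) :
    R x (J x) y (J y) = R x y x y + R x (J y) x (J y) := by
  have hBianchi := hR.2.2 x (J x) y (J y)
  have h₁ : R y x (J x) (J y) = -R x y x y := by rw [← hKahler, hR.1]
  have h₂ : R (J x) y x (J y) = -R x (J y) x (J y) := by
    rw [hR.2.1, hKahler x (J y) (J x), hJ2, map_neg, LinearMap.neg_apply]
  linarith

end KahlerCurvature

theorem stmt_17_general
    (J : V →ₗ[ℝ] V)
    (hJ2 : ∀ x : V, J (J x) = -x)
    (hJinner : ∀ x y : V, ⟪J x, J y⟫ = ⟪x, y⟫)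
    (R : V →ₗ[ℝ] V →ₗ[ℝ] V →ₗ[ℝ] V →ₗ[ℝ] ℝ)
    (hR : IsAlgCurvatureTensor R)
    (hKahler : ∀ x y z w : V, R x y z w = R x y (J z) (J w))
    (β : ℝ) (hβ : 1 < β)
    (hIC : ∀ e : Fin 4 → V, Orthonormal ℝ e →
      0 ≤ R (e 0) (e 2) (e 0) (e 2) + R (e 0) (e 3) (e 0) (e 3)
          + R (e 1) (e 2) (e 1) (e 2) + R (e 1) (e 3) (e 1) (e 3)
          - 2 * β * R (e 0) (e 1) (e 2) (e 3)) :
    ∀ X Y : V, ‖X‖ = 1 → ‖Y‖ = 1 → ⟪X, Y⟫ = 0 → ⟪X, J Y⟫ = 0 →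
      R X (J X) Y (J Y) = 0 := by
  intro X Y hX hY hXY hXJY
  have hbound := abs_two_mul_le_of_forall_orthonormal hR.1 hIC
    (orthonormal_complexFrame hJ2 hJinner hX hY hXY hXJY)
  simp only [Matrix.cons_val_zero, Matrix.cons_val_one, Matrix.cons_val_two,
    Matrix.cons_val_three, Matrix.head_cons, Matrix.tail_cons] at hbound
  have hsum : R X Y X Y + R X (J Y) X (J Y) + R (J X) Y (J X) Y + R (J X) (J Y) (J X) (J Y)
      = 2 * R X (J X) Y (J Y) := by
    rw [hR.sectional_map_left hJ2 hKahler, hR.sectional_map_map hKahler,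
      hR.bisectional_eq_sectional_add_sectional hJ2 hKahler]
    ring
  rw [hsum] at hbound
  have hupper : (β - 1) * R X (J X) Y (J Y) ≤ 0 := by
    linarith [le_abs_self (2 * β * R X (J X) Y (J Y))]
  have hlower : 0 ≤ (β + 1) * R X (J X) Y (J Y) := by
    linarith [neg_abs_le (2 * β * R X (J X) Y (J Y))]
  nlinarith

theorem stmt_17 {m : ℕ} (hm : 2 ≤ m)
    (hdim : Module.finrank ℝ V = 2 * m)
    (J : V →ₗ[ℝ] V)
    (hJ2 : ∀ x : V, J (J x) = -x)
    (hJinner : ∀ x y : V, ⟪J x, J y⟫ = ⟪x, y⟫)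
    (R : V →ₗ[ℝ] V →ₗ[ℝ] V →ₗ[ℝ] V →ₗ[ℝ] ℝ)
    (hR : IsAlgCurvatureTensor R)
    (hKahler : ∀ x y z w : V, R x y z w = R x y (J z) (J w))
    (β : ℝ) (hβ : 1 < β)
    (hIC : ∀ e : Fin 4 → V, Orthonormal ℝ e →
      0 ≤ R (e 0) (e 2) (e 0) (e 2) + R (e 0) (e 3) (e 0) (e 3)
          + R (e 1) (e 2) (e 1) (e 2) + R (e 1) (e 3) (e 1) (e 3)
          - 2 * β * R (e 0) (e 1) (e 2) (e 3)) :
    ∀ X Y : V, ‖X‖ = 1 → ‖Y‖ = 1 → ⟪X, Y⟫ = 0 → ⟪X, J Y⟫ = 0 →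
      R X (J X) Y (J Y) = 0 :=
  stmt_17_general J hJ2 hJinner R hR hKahler β hβ hIC
end
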